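/- Under the gradient flow dθ_i/dt = π_i(θ)(p_i − A(θ)) with π = softmax(θ), let i* be the unique maximizer of p and let p' = max_{i ≠ i*} p_i. If A(θ(0)) > p_i for all i ≠ i*, then for all t ≥ 0, dπ_{i*}/dt ≥ (p_{i*} − p') π_{i*}^2 (1 − π_{i*})^2. -/

import Mathlib

open Finset

noncomputable def softmax {n : ℕ} (θ : Fin n → ℝ) (i : Fin n) : ℝ :=
  Real.exp (θ i) / ∑ k, Real.exp (θ k)

lemma sum_exp_pos {n : ℕ} [NeZero n] (θ : Fin n → ℝ) : 0 < ∑ k, Real.exp (θ k) :=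
  Finset.sum_pos (fun k _ => Real.exp_pos _) univ_nonempty

lemma softmax_pos {n : ℕ} [NeZero n] (θ : Fin n → ℝ) (i : Fin n) : 0 < softmax θ i :=
  div_pos (Real.exp_pos _) (sum_exp_pos θ)

lemma softmax_sum_one {n : ℕ} [NeZero n] (θ : Fin n → ℝ) : ∑ i, softmax θ i = 1 := by
  unfold softmax
  rw [← Finset.sum_div, div_self (sum_exp_pos θ).ne']

lemma softmax_hasDerivAt {n : ℕ} [NeZero n] (θ : ℝ → Fin n → ℝ) (t : ℝ) (v : Fin n → ℝ)
    (hd : ∀ i, HasDerivAt (fun s => θ s i) (v i) t) (i : Fin n) :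
    HasDerivAt (fun s => softmax (θ s) i)
      (softmax (θ t) i * (v i - ∑ k, softmax (θ t) k * v k)) t := by
  have hS : 0 < ∑ k, Real.exp (θ t k) := sum_exp_pos _
  have hnum : HasDerivAt (fun s => Real.exp (θ s i)) (Real.exp (θ t i) * v i) t :=
    (hd i).exp
  have hden : HasDerivAt (fun s => ∑ k, Real.exp (θ s k))
      (∑ k, Real.exp (θ t k) * v k) t :=
    HasDerivAt.fun_sum fun k _ => (hd k).exp
  have h : HasDerivAt (fun s => Real.exp (θ s i) / ∑ k, Real.exp (θ s k)) _ t :=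
    hnum.fun_div hden hS.ne'
  convert h using 1
  · rfl
  unfold softmax
  simp only [div_mul_eq_mul_div, ← Finset.sum_div]
  field_simp

theorem regime1_derivative_lower_bound {n : ℕ}
    (p : Fin n → ℝ) (hp : ∀ i, p i ∈ Set.Icc (0 : ℝ) 1)
    (istar : Fin n) (hmax : ∀ i, i ≠ istar → p i < p istar)
    (hne : (Finset.univ.erase istar).Nonempty)
    (θ : ℝ → Fin n → ℝ)
    (hflow : ∀ t, 0 ≤ t → ∀ i, HasDerivAt (fun s => θ s i)
      (softmax (θ t) i * (p i - ∑ j, softmax (θ t) j * p j)) t)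
    (hinit : ∀ i, i ≠ istar → p i < ∑ j, softmax (θ 0) j * p j) :
    ∀ t, 0 ≤ t →
      deriv (fun s => softmax (θ s) istar) t ≥
        (p istar - (Finset.univ.erase istar).sup' hne p) *
          (softmax (θ t) istar) ^ 2 * (1 - softmax (θ t) istar) ^ 2 := by
  haveI : NeZero n := NeZero.of_pos istar.pos
  set A : ℝ → ℝ := fun t => ∑ j, softmax (θ t) j * p j with hAdef
  -- derivative of A is the variance term, hence nonnegative
  have hAderiv : ∀ t, 0 ≤ t → HasDerivAt A
      (∑ j, (softmax (θ t) j * (p j - A t)) ^ 2) t := by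
    intro t ht
    have h1 : HasDerivAt A (∑ j, (softmax (θ t) j *
        ((softmax (θ t) j * (p j - A t)) -
          ∑ k, softmax (θ t) k * (softmax (θ t) k * (p k - A t)))) * p j) t := by
      apply HasDerivAt.fun_sum
      intro j _
      exact (softmax_hasDerivAt θ t _ (hflow t ht) j).mul_const (p j)
    convert h1 using 1
    set π := softmax (θ t) with hπ
    set C := ∑ k, π k * (π k * (p k - A t)) with hC
    rw [← sub_eq_zero, ← Finset.sum_sub_distrib]
    have hterm : ∀ j, (π j * (p j - A t)) ^ 2 - (π j * (π j * (p j - A t) - C)) * p j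
        = C * (π j * p j) - A t * (π j * (π j * (p j - A t))) := by
      intro j; ring
    rw [Finset.sum_congr rfl fun j _ => hterm j, Finset.sum_sub_distrib,
      ← Finset.mul_sum, ← Finset.mul_sum, ← hC]
    have hAt : A t = ∑ j, π j * p j := rfl
    rw [← hAt]; ring
  -- A is monotone on [0, ∞)
  have hmono : MonotoneOn A (Set.Ici (0 : ℝ)) := by
    apply monotoneOn_of_deriv_nonneg (convex_Ici 0)
    · exact fun t ht => (hAderiv t ht).continuousAt.continuousWithinAt
    · rw [interior_Ici]
      exact fun t ht => (hAderiv t (le_of_lt ht)).differentiableAt.differentiableWithinAt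
    · rw [interior_Ici]
      intro t ht
      rw [(hAderiv t ht.le).deriv]
      positivity
  intro t ht
  set π := softmax (θ t) with hπ
  have hpos : ∀ i, 0 < π i := softmax_pos (θ t)
  have hsum1 : ∑ i, π i = 1 := softmax_sum_one (θ t)
  set p' := (Finset.univ.erase istar).sup' hne p with hp'
  have hp'lt : p' < p istar :=
    (Finset.sup'_lt_iff hne).mpr fun i hi => hmax i (Finset.ne_of_mem_erase hi)
  have hp'le : ∀ j ∈ Finset.univ.erase istar, p j ≤ p' := fun j hj => Finset.le_sup' p hj
  -- A t > p i for i ≠ istar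
  have hA0t : A 0 ≤ A t := hmono (Set.self_mem_Ici) (Set.mem_Ici.mpr ht) ht
  have hp'A0 : p' < A 0 :=
    (Finset.sup'_lt_iff hne).mpr fun i hi => hinit i (Finset.ne_of_mem_erase hi)
  have hAbig : ∀ j, j ≠ istar → p j < A t := fun j hj =>
    lt_of_le_of_lt (hp'le j (Finset.mem_erase.mpr ⟨hj, mem_univ j⟩)) (lt_of_lt_of_le hp'A0 hA0t)
  -- the derivative of π istar
  have hD : HasDerivAt (fun s => softmax (θ s) istar)
      (π istar * ((π istar * (p istar - A t)) -
        ∑ k, π k * (π k * (p k - A t)))) t :=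
    softmax_hasDerivAt θ t _ (hflow t ht) istar
  rw [ge_iff_le, hD.deriv]
  set a := π istar with ha
  -- split sums over istar
  have hsplit : ∀ f : Fin n → ℝ, ∑ k, f k = f istar + ∑ k ∈ Finset.univ.erase istar, f k :=
    fun f => (Finset.add_sum_erase univ f (mem_univ istar)).symm
  have hb : 1 - a = ∑ k ∈ Finset.univ.erase istar, π k := by
    have := hsplit π
    rw [hsum1] at this
    linarith
  have hbpos : 0 < 1 - a := by
    rw [hb]; exact Finset.sum_pos (fun k _ => hpos k) hne
  set E := ∑ k ∈ Finset.univ.erase istar, π k * (π k * (p k - A t)) with hE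
  have hEle : E ≤ 0 := by
    apply Finset.sum_nonpos
    intro k hk
    have h1 : p k - A t ≤ 0 := by
      have := hAbig k (Finset.ne_of_mem_erase hk); linarith
    have h2 := (hpos k).le
    nlinarith [mul_nonneg h2 h2]
  have hsumeq : ∑ k, π k * (π k * (p k - A t)) = a * (a * (p istar - A t)) + E :=
    hsplit _
  -- gap bound : p istar - A t ≥ (1 - a) * (p istar - p')
  have hgap : (1 - a) * (p istar - p') ≤ p istar - A t := by
    have hexp : p istar - A t = ∑ k ∈ Finset.univ.erase istar, π k * (p istar - p k) := by
      have h1 : A t = a * p istar + ∑ k ∈ Finset.univ.erase istar, π k * p k :=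
        hsplit fun k => π k * p k
      have h2 : ∑ k ∈ Finset.univ.erase istar, π k * (p istar - p k)
          = (∑ k ∈ Finset.univ.erase istar, π k) * p istar
            - ∑ k ∈ Finset.univ.erase istar, π k * p k := by
        rw [Finset.sum_mul, ← Finset.sum_sub_distrib]
        exact Finset.sum_congr rfl fun k _ => by ring
      rw [h2, ← hb, h1]
      ring
    rw [hexp, hb, Finset.sum_mul]
    apply Finset.sum_le_sum
    intro k hk
    have h1 := hp'le k hk
    have := (hpos k).le
    nlinarith
  rw [hsumeq]
  have h1 : 0 ≤ a * a * (1 - a) * ((p istar - A t) - (1 - a) * (p istar - p')) := by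
    apply mul_nonneg
    · exact mul_nonneg (mul_nonneg (hpos istar).le (hpos istar).le) hbpos.le
    · linarith
  have h2 : 0 ≤ a * (-E) := mul_nonneg (hpos istar).le (by linarith)
  nlinarith [hpos istar]
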